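/- With the same setup (α < β ≤ γ < δ, β-α = δ-γ = r, equispaced nodes ξ^1_κ ∈ (α,β) and ξ^2_κ ∈ (γ,δ)), for every x with ξ^2_k < x < ξ^2_{k+1} (1 ≤ k ≤ K-1), W_{μ,1}(x) ≤ ( k!(K-k)! / ( ∏_{κ=1}^K (k+κ) + (K+1)^K ((γ-β)/r)^K ) )^μ. -/

import Mathlib

/-!
In units of the node spacing `h = r / (K + 1)` write `x = γ + h t` with `k < t < k + 1` and
`γ - β = h u`; then `x - ξ²_κ = h (t - κ)` and `x - ξ¹_κ = h (t + u + K + 1 - κ)`, and the weight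
is at most `(B / A) ^ μ` with `B = ∏ |t - κ|` and `A = ∏ (t + u + K + 1 - κ)`. Each node left of
`t` is within `k + 1 - κ` of it and each node right of it within `κ - k`, so `B ≤ k! (K - k)!`;
reflecting `κ ↦ K + 1 - κ` gives `A ≥ ∏ (u + k + κ) ≥ ∏ (k + κ) + u ^ K`.
-/

open Nat Finset

theorem Finset.prod_Icc_one_reflect {M : Type*} [CommMonoid M] (f : ℕ → M) (n : ℕ) :
    ∏ i ∈ Icc 1 n, f (n + 1 - i) = ∏ i ∈ Icc 1 n, f i :=
  prod_nbij' (fun i ↦ n + 1 - i) (fun i ↦ n + 1 - i) (by simp only [mem_Icc]; omega)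
    (by simp only [mem_Icc]; omega) (by simp only [mem_Icc]; omega)
    (by simp only [mem_Icc]; omega) fun _ _ ↦ rfl

theorem Finset.prod_Ioc_sub_eq_factorial (k n : ℕ) : ∏ i ∈ Ioc k n, (i - k) = (n - k)! := by
  induction n with
  | zero => simp
  | succ n ih =>
    rcases le_or_gt k n with hkn | hnk
    · rw [prod_Ioc_succ_top hkn, ih, Nat.sub_add_comm hkn, factorial_succ, mul_comm]
    · rw [Ioc_eq_empty (by omega), prod_empty, Nat.sub_eq_zero_of_le hnk, factorial_zero]

theorem Finset.prod_Icc_one_add_one_sub_eq_factorial (n : ℕ) :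
    ∏ i ∈ Icc 1 n, (n + 1 - i) = n ! := by
  rw [prod_Icc_one_reflect (fun i ↦ i), ← prod_Ico_id_eq_factorial]
  rfl

theorem prod_abs_sub_natCast_le {k K : ℕ} (hkK : k ≤ K) {t : ℝ}
    (ht : t ∈ Set.Icc (k : ℝ) (k + 1)) :
    ∏ κ ∈ Icc 1 K, |t - κ| ≤ k ! * (K - k)! := by
  obtain ⟨htk, htk1⟩ := ht
  have hleft : ∏ κ ∈ Icc 1 k, |t - κ| ≤ k ! := by
    calc ∏ κ ∈ Icc 1 k, |t - κ| ≤ ∏ κ ∈ Icc 1 k, ((k + 1 - κ : ℕ) : ℝ) := by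
          refine prod_le_prod (fun _ _ ↦ abs_nonneg _) fun κ hκ ↦ ?_
          have hκk : κ ≤ k := (mem_Icc.1 hκ).2
          have : (κ : ℝ) ≤ k := by exact_mod_cast hκk
          rw [abs_of_nonneg (by linarith), Nat.cast_sub (by omega)]
          push_cast
          linarith
      _ = k ! := by rw [← Nat.cast_prod, prod_Icc_one_add_one_sub_eq_factorial]
  have hright : ∏ κ ∈ Ioc k K, |t - κ| ≤ (K - k)! := by
    calc ∏ κ ∈ Ioc k K, |t - κ| ≤ ∏ κ ∈ Ioc k K, ((κ - k : ℕ) : ℝ) := by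
          refine prod_le_prod (fun _ _ ↦ abs_nonneg _) fun κ hκ ↦ ?_
          have hkκ : k + 1 ≤ κ := (mem_Ioc.1 hκ).1
          have : (k : ℝ) + 1 ≤ κ := by exact_mod_cast hkκ
          rw [abs_of_nonpos (by linarith), Nat.cast_sub (by omega)]
          linarith
      _ = (K - k)! := by rw [← Nat.cast_prod, prod_Ioc_sub_eq_factorial]
  have hIcc (n : ℕ) : Icc 1 n = Ioc 0 n := Icc_add_one_left_eq_Ioc 0 n
  rw [hIcc, ← prod_Ioc_consecutive _ (Nat.zero_le k) hkK, ← hIcc]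
  exact mul_le_mul hleft hright (prod_nonneg fun _ _ ↦ abs_nonneg _) (by positivity)

theorem prod_abs_sub_natCast_pos {k : ℕ} {t : ℝ} (ht : t ∈ Set.Ioo (k : ℝ) (k + 1))
    (s : Finset ℕ) : 0 < ∏ κ ∈ s, |t - κ| :=
  prod_pos fun κ _ ↦ abs_pos.2 <| sub_ne_zero.2 <| by
    rintro rfl
    rcases le_or_gt κ k with hκ | hκ
    · exact ht.1.not_ge (by exact_mod_cast hκ)
    · exact ht.2.not_ge (by exact_mod_cast hκ)

theorem prod_natCast_add_add_pow_le_prod_abs {k K : ℕ} (hK : K ≠ 0) {t u : ℝ}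
    (ht : (k : ℝ) ≤ t) (hu : 0 ≤ u) :
    ∏ κ ∈ Icc 1 K, ((k : ℝ) + κ) + u ^ K ≤ ∏ κ ∈ Icc 1 K, |t + u + (K + 1) - κ| := by
  calc ∏ κ ∈ Icc 1 K, ((k : ℝ) + κ) + u ^ K
      = ∏ κ ∈ Icc 1 K, ((k : ℝ) + κ) + ∏ _κ ∈ Icc 1 K, u := by simp
    _ ≤ ∏ κ ∈ Icc 1 K, ((k : ℝ) + κ + u) :=
        prod_add_prod_le (i := 1) (mem_Icc.2 ⟨le_rfl, Nat.one_le_iff_ne_zero.2 hK⟩) le_rfl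
          (fun _ _ _ ↦ le_add_of_nonneg_right hu)
          (fun _ _ _ ↦ le_add_of_nonneg_left (by positivity)) (fun _ _ ↦ by positivity)
          (fun _ _ ↦ hu)
    _ = ∏ κ ∈ Icc 1 K, ((k : ℝ) + ((K + 1 - κ : ℕ) : ℝ) + u) :=
        (prod_Icc_one_reflect (fun κ ↦ (k : ℝ) + κ + u) K).symm
    _ ≤ ∏ κ ∈ Icc 1 K, |t + u + (K + 1) - κ| := by
        refine prod_le_prod (fun κ _ ↦ by positivity) fun κ hκ ↦ ?_
        rw [Nat.cast_sub ((mem_Icc.1 hκ).2.trans K.le_succ)]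
        push_cast
        exact le_trans (by linarith) (le_abs_self _)

theorem prod_abs_sub_div_prod_abs_le {k K : ℕ} (hK : K ≠ 0) (hkK : k ≤ K) {t u : ℝ}
    (ht : t ∈ Set.Icc (k : ℝ) (k + 1)) (hu : 0 ≤ u) :
    (∏ κ ∈ Icc 1 K, |t - κ|) / ∏ κ ∈ Icc 1 K, |t + u + (K + 1) - κ| ≤
      ((k ! * (K - k)! : ℕ) : ℝ) / (∏ κ ∈ Icc 1 K, ((k : ℝ) + κ) + u ^ K) := by
  have hD : 0 < ∏ κ ∈ Icc 1 K, ((k : ℝ) + κ) + u ^ K :=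
    add_pos_of_pos_of_nonneg (prod_pos fun κ hκ ↦
      add_pos_of_nonneg_of_pos k.cast_nonneg (Nat.cast_pos.2 (mem_Icc.1 hκ).1)) (pow_nonneg hu K)
  push_cast
  exact div_le_div₀ (by positivity) (prod_abs_sub_natCast_le hkK ht) hD
    (prod_natCast_add_add_pow_le_prod_abs hK ht.1 hu)

theorem Real.rpow_neg_div_rpow_neg_add_le {a b : ℝ} (ha : 0 ≤ a) (hb : 0 < b) (μ : ℝ) :
    a ^ (-μ) / (a ^ (-μ) + b ^ (-μ)) ≤ (b / a) ^ μ :=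
  calc a ^ (-μ) / (a ^ (-μ) + b ^ (-μ))
      ≤ a ^ (-μ) / b ^ (-μ) := div_le_div_of_nonneg_left (by positivity) (by positivity)
        (le_add_of_nonneg_left (by positivity))
    _ = (b / a) ^ μ := by
        rw [rpow_neg ha, rpow_neg hb.le, div_rpow hb.le ha, inv_div_inv]

theorem prod_abs_mul_rpow_neg_div_le {ι : Type*} (s : Finset ι) {c : ℝ} (hc : 0 < c)
    (f g : ι → ℝ) (hg : 0 < ∏ i ∈ s, |g i|) (μ : ℝ) :
    (∏ i ∈ s, |c * f i| ^ (-μ)) /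
        ((∏ i ∈ s, |c * f i| ^ (-μ)) + ∏ i ∈ s, |c * g i| ^ (-μ)) ≤
      ((∏ i ∈ s, |g i|) / ∏ i ∈ s, |f i|) ^ μ := by
  have hscale (f : ι → ℝ) : ∏ i ∈ s, |c * f i| = c ^ #s * ∏ i ∈ s, |f i| := by
    simp [abs_mul, prod_mul_distrib, abs_of_pos hc]
  rw [Real.finsetProd_rpow _ _ (fun _ _ ↦ abs_nonneg _),
    Real.finsetProd_rpow _ _ (fun _ _ ↦ abs_nonneg _), hscale, hscale,
    ← mul_div_mul_left (∏ i ∈ s, |g i|) _ (pow_ne_zero #s hc.ne')]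
  exact Real.rpow_neg_div_rpow_neg_add_le (by positivity) (mul_pos (pow_pos hc _) hg) μ

theorem stmt_7_general (K : ℕ) (hK : 2 ≤ K) (α β γ δ r μ : ℝ)
    (hβγ : β ≤ γ) (hr : 0 < r)
    (hr1 : β - α = r) (hr2 : δ - γ = r) (hμ : 0 < μ)
    (ξ1 ξ2 : ℕ → ℝ)
    (hξ1 : ∀ κ, ξ1 κ = α + (κ : ℝ) * (β - α) / (K + 1))
    (hξ2 : ∀ κ, ξ2 κ = γ + (κ : ℝ) * (δ - γ) / (K + 1))
    (k : ℕ) (hk2 : k ≤ K - 1)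
    (x : ℝ) (hx : x ∈ Set.Ioo (ξ2 k) (ξ2 (k + 1))) :
    (∏ κ ∈ Finset.Icc 1 K, |x - ξ1 κ| ^ (-μ)) /
        ((∏ κ ∈ Finset.Icc 1 K, |x - ξ1 κ| ^ (-μ)) +
          ∏ κ ∈ Finset.Icc 1 K, |x - ξ2 κ| ^ (-μ)) ≤
      (((k ! * (K - k)! : ℕ) : ℝ) /
          ((∏ κ ∈ Finset.Icc 1 K, ((k : ℝ) + κ)) +
            ((K : ℝ) + 1) ^ K * ((γ - β) / r) ^ K)) ^ μ := by
  obtain ⟨h, hh, hrh⟩ : ∃ h : ℝ, 0 < h ∧ r = h * (K + 1) :=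
    ⟨r / (K + 1), by positivity, by field_simp⟩
  have hh_eq : r / (K + 1) = h := by rw [hrh]; field_simp
  obtain ⟨t, hxt⟩ : ∃ t : ℝ, x = γ + h * t := ⟨(x - γ) / h, by field_simp; ring⟩
  obtain ⟨u, hu_def⟩ : ∃ u : ℝ, u = (K + 1) * ((γ - β) / r) := ⟨_, rfl⟩
  have hu : γ - β = h * u := by rw [hu_def, hrh]; field_simp
  have hx1 (κ : ℕ) : x - ξ1 κ = h * (t + u + (K + 1) - κ) := by
    rw [hξ1, hr1, mul_div_assoc, hh_eq]
    linear_combination hxt + hu + hr1 + hrh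
  have hx2 (κ : ℕ) : x - ξ2 κ = h * (t - κ) := by
    rw [hξ2, hr2, mul_div_assoc, hh_eq]
    linear_combination hxt
  have ht : t ∈ Set.Ioo (k : ℝ) (k + 1) := by
    obtain ⟨hlow, hupp⟩ := hx
    have hlow' := pos_of_mul_pos_right ((hx2 k).symm ▸ sub_pos.2 hlow) hh.le
    have hupp' := neg_of_mul_neg_right ((hx2 (k + 1)).symm ▸ sub_neg.2 hupp) hh.le
    push_cast at hupp'
    constructor <;> linarith
  simp_rw [hx1, hx2]
  refine (prod_abs_mul_rpow_neg_div_le _ hh _ _ (prod_abs_sub_natCast_pos ht _) μ).trans ?_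
  rw [← mul_pow, ← hu_def]
  refine Real.rpow_le_rpow (by positivity) (prod_abs_sub_div_prod_abs_le (by omega) (by omega)
    (Set.Ioo_subset_Icc_self ht) ?_) hμ.le
  rw [hu_def]
  have := sub_nonneg.2 hβγ
  positivity

theorem stmt_7 (K : ℕ) (hK : 2 ≤ K) (α β γ δ r μ : ℝ)
    (hαβ : α < β) (hβγ : β ≤ γ) (hγδ : γ < δ) (hr : 0 < r)
    (hr1 : β - α = r) (hr2 : δ - γ = r) (hμ : 0 < μ)
    (ξ1 ξ2 : ℕ → ℝ)
    (hξ1 : ∀ κ, ξ1 κ = α + (κ : ℝ) * (β - α) / (K + 1))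
    (hξ2 : ∀ κ, ξ2 κ = γ + (κ : ℝ) * (δ - γ) / (K + 1))
    (k : ℕ) (hk1 : 1 ≤ k) (hk2 : k ≤ K - 1)
    (x : ℝ) (hx : x ∈ Set.Ioo (ξ2 k) (ξ2 (k + 1))) :
    (∏ κ ∈ Finset.Icc 1 K, |x - ξ1 κ| ^ (-μ)) /
        ((∏ κ ∈ Finset.Icc 1 K, |x - ξ1 κ| ^ (-μ)) +
          ∏ κ ∈ Finset.Icc 1 K, |x - ξ2 κ| ^ (-μ)) ≤
      (((k ! * (K - k)! : ℕ) : ℝ) /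
          ((∏ κ ∈ Finset.Icc 1 K, ((k : ℝ) + κ)) +
            ((K : ℝ) + 1) ^ K * ((γ - β) / r) ^ K)) ^ μ :=
  stmt_7_general K hK α β γ δ r μ hβγ hr hr1 hr2 hμ ξ1 ξ2 hξ1 hξ2 k hk2 x hx
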